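/- Let Q be a fine, sharp, saturated additive commutative monoid and A a commutative ring. Then there exist d ∈ ℕ and an injective additive monoid homomorphism ι : Q → ℕ^d such that the induced A-algebra map A[ι] : A[Q] → A[ℕ^d] admits an A[Q]-linear splitting, i.e., an A[Q]-linear map σ : A[ℕ^d] → A[Q] with σ ∘ A[ι] = id. -/

import Mathlib

universe u v

open Finset

section FourierMotzkin


/-- A set cut out by finitely many linear inequalities. -/
def IsPolyhedral {k : ℕ} (S : Set (Fin k → ℚ)) : Prop :=
  ∃ T : Finset ((Fin k → ℚ) →ₗ[ℚ] ℚ), S = {x | ∀ φ ∈ T, 0 ≤ φ x}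

/-- `x ↦ Fin.snoc x 0` as a linear map. -/
def snocZeroLM (k : ℕ) : (Fin k → ℚ) →ₗ[ℚ] (Fin (k + 1) → ℚ) where
  toFun x := Fin.snoc x 0
  map_add' x y := by
    funext i
    refine Fin.lastCases ?_ ?_ i <;> simp
  map_smul' c x := by
    funext i
    refine Fin.lastCases ?_ ?_ i <;> simp

lemma snoc_decomp {k : ℕ} (x : Fin k → ℚ) (c : ℚ) :
    (Fin.snoc x c : Fin (k + 1) → ℚ)
      = Fin.snoc x 0 + c • (Fin.snoc 0 1 : Fin (k + 1) → ℚ) := by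
  funext i
  refine Fin.lastCases ?_ ?_ i <;> simp

lemma phi_snoc {k : ℕ} (φ : (Fin (k + 1) → ℚ) →ₗ[ℚ] ℚ) (x : Fin k → ℚ) (c : ℚ) :
    φ (Fin.snoc x c) = φ (snocZeroLM k x) + c * φ (Fin.snoc (0 : Fin k → ℚ) 1) := by
  rw [snoc_decomp, map_add, map_smul]
  rfl

lemma existsBetween' {α : Type*} (P N : Finset α) (lb ub : α → ℚ)
    (h : ∀ p ∈ P, ∀ q ∈ N, lb p ≤ ub q) :
    ∃ c : ℚ, (∀ p ∈ P, lb p ≤ c) ∧ (∀ q ∈ N, c ≤ ub q) := by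
  classical
  rcases P.eq_empty_or_nonempty with hP | hP
  · rcases N.eq_empty_or_nonempty with hN | hN
    · exact ⟨0, by simp [hP], by simp [hN]⟩
    · refine ⟨(N.image ub).min' (hN.image ub), by simp [hP], fun q hq => ?_⟩
      exact Finset.min'_le _ _ (Finset.mem_image_of_mem ub hq)
  · refine ⟨(P.image lb).max' (hP.image lb), fun p hp => Finset.le_max' _ _
      (Finset.mem_image_of_mem lb hp), fun q hq => ?_⟩
    refine Finset.max'_le _ _ _ ?_
    rintro y hy
    rcases Finset.mem_image.1 hy with ⟨p, hp, rfl⟩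
    exact h p hp q hq

/-- Fourier–Motzkin elimination step. -/
lemma IsPolyhedral.proj {k : ℕ} {S : Set (Fin (k + 1) → ℚ)} (h : IsPolyhedral S) :
    IsPolyhedral {x : Fin k → ℚ | ∃ c : ℚ, Fin.snoc x c ∈ S} := by
  classical
  obtain ⟨T, rfl⟩ := h
  set a : ((Fin (k + 1) → ℚ) →ₗ[ℚ] ℚ) → ℚ := fun φ => φ (Fin.snoc (0 : Fin k → ℚ) 1) with ha
  set g : ((Fin (k + 1) → ℚ) →ₗ[ℚ] ℚ) → ((Fin k → ℚ) →ₗ[ℚ] ℚ) :=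
    fun φ => φ.comp (snocZeroLM k) with hg
  set Z := T.filter (fun φ => a φ = 0) with hZ
  set P := T.filter (fun φ => 0 < a φ) with hP
  set N := T.filter (fun φ => a φ < 0) with hN
  refine ⟨Z.image g ∪ (P ×ˢ N).image
      (fun pq => (-(a pq.2)) • g pq.1 + (a pq.1) • g pq.2), ?_⟩
  ext x
  simp only [Set.mem_setOf_eq, Finset.mem_union, Finset.mem_image]
  constructor
  · rintro ⟨c, hc⟩ ψ hψ
    have key : ∀ φ ∈ T, g φ x = φ (Fin.snoc x c) - c * a φ := by
      intro φ _
      have := phi_snoc φ x c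
      simp only [hg, LinearMap.comp_apply]
      linarith [phi_snoc φ x c]
    rcases hψ with ⟨φ, hφZ, rfl⟩ | ⟨⟨p, q⟩, hpq, rfl⟩
    · rcases Finset.mem_filter.1 hφZ with ⟨hφT, ha0⟩
      have := hc φ hφT
      rw [key φ hφT, ha0]
      linarith
    · rcases Finset.mem_product.1 hpq with ⟨hp, hq⟩
      simp only at hp hq
      rcases Finset.mem_filter.1 hp with ⟨hpT, hap⟩
      rcases Finset.mem_filter.1 hq with ⟨hqT, haq⟩
      have h1 := hc p hpT
      have h2 := hc q hqT
      have k1 := key p hpT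
      have k2 := key q hqT
      simp only [LinearMap.add_apply, LinearMap.smul_apply, smul_eq_mul]
      rw [k1, k2]
      nlinarith
  · intro hx
    have hZ' : ∀ φ ∈ Z, 0 ≤ g φ x := by
      intro φ hφ
      exact hx (g φ) (Or.inl ⟨φ, hφ, rfl⟩)
    have hPN : ∀ p ∈ P, ∀ q ∈ N, (-(g p x)) / a p ≤ (g q x) / (-(a q)) := by
      intro p hp q hq
      rcases Finset.mem_filter.1 hp with ⟨hpT, hap⟩
      rcases Finset.mem_filter.1 hq with ⟨hqT, haq⟩
      have hcomb : 0 ≤ ((-(a q)) • g p + (a p) • g q) x :=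
        hx _ (Or.inr ⟨(p, q), Finset.mem_product.2 ⟨hp, hq⟩, rfl⟩)
      simp only [LinearMap.add_apply, LinearMap.smul_apply, smul_eq_mul] at hcomb
      rw [div_le_div_iff₀ hap (by linarith)]
      nlinarith
    obtain ⟨c, hcP, hcN⟩ := existsBetween' P N (fun p => (-(g p x)) / a p)
      (fun q => (g q x) / (-(a q))) hPN
    refine ⟨c, ?_⟩
    intro φ hφT
    have key : φ (Fin.snoc x c) = g φ x + c * a φ := by
      have := phi_snoc φ x c
      simp only [hg, LinearMap.comp_apply]
      linarith [phi_snoc φ x c]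
    rw [key]
    rcases lt_trichotomy (a φ) 0 with hlt | heq | hgt
    · have hφN : φ ∈ N := Finset.mem_filter.2 ⟨hφT, hlt⟩
      have := hcN φ hφN
      rw [le_div_iff₀ (by linarith)] at this
      nlinarith
    · have hφZ : φ ∈ Z := Finset.mem_filter.2 ⟨hφT, heq⟩
      have := hZ' φ hφZ
      rw [heq]
      linarith
    · have hφP : φ ∈ P := Finset.mem_filter.2 ⟨hφT, hgt⟩
      have := hcP φ hφP
      rw [div_le_iff₀ hgt] at this
      nlinarith

/-- remove-last-and-subtract linear map used in the induction. -/
def peelLM (r : ℕ) (v : Fin r → ℚ) : (Fin (r + 1) → ℚ) →ₗ[ℚ] (Fin r → ℚ) where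
  toFun y := (fun i => y (Fin.castSucc i)) - (y (Fin.last r)) • v
  map_add' y z := by
    funext i; simp [Pi.sub_apply]; ring
  map_smul' c y := by
    funext i; simp [Pi.sub_apply]; ring

/-- the last coordinate as a linear map -/
def lastLM (r : ℕ) : (Fin (r + 1) → ℚ) →ₗ[ℚ] ℚ where
  toFun y := y (Fin.last r)
  map_add' y z := rfl
  map_smul' c y := rfl

theorem cone_isPolyhedral {r : ℕ} : ∀ {n : ℕ} (v : Fin n → (Fin r → ℚ)),
    IsPolyhedral {x | ∃ lam : Fin n → ℚ, (∀ i, 0 ≤ lam i) ∧ x = ∑ i, lam i • v i} := by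
  intro n
  induction n with
  | zero =>
    intro v
    classical
    refine ⟨(Finset.univ.image (fun i : Fin r => LinearMap.proj i)) ∪
      (Finset.univ.image (fun i : Fin r => -LinearMap.proj (R := ℚ) (φ := fun _ : Fin r => ℚ) i)), ?_⟩
    ext x
    simp only [Set.mem_setOf_eq, Finset.mem_union, Finset.mem_image, Finset.mem_univ,
      true_and]
    constructor
    · rintro ⟨lam, -, rfl⟩ φ hφ
      rcases hφ with ⟨i, rfl⟩ | ⟨i, rfl⟩ <;> simp
    · intro hx
      refine ⟨fun i => 0, fun i => le_refl _, ?_⟩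
      funext i
      have h1 : 0 ≤ x i := hx _ (Or.inl ⟨i, rfl⟩)
      have h2 : 0 ≤ -(x i) := by
        have := hx _ (Or.inr ⟨i, rfl⟩)
        simpa using this
      simp
      linarith
  | succ n ih =>
    intro v
    classical
    have hSn := ih (fun i => v (Fin.castSucc i))
    obtain ⟨T, hT⟩ := hSn
    -- T' describes {y : ℚ^{r+1} | y_last ≥ 0 ∧ peel y ∈ S_n}
    have hT' : IsPolyhedral {y : Fin (r + 1) → ℚ |
        ∀ φ ∈ insert (lastLM r) (T.image (fun ψ => ψ.comp (peelLM r (v (Fin.last n))))), 0 ≤ φ y} :=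
      ⟨_, rfl⟩
    have hproj := hT'.proj
    convert hproj using 1
    ext x
    simp only [Set.mem_setOf_eq]
    constructor
    · rintro ⟨lam, hlam, rfl⟩
      refine ⟨lam (Fin.last n), ?_⟩
      intro φ hφ
      rcases Finset.mem_insert.1 hφ with rfl | hφ
      · simpa [lastLM] using hlam (Fin.last n)
      · rcases Finset.mem_image.1 hφ with ⟨ψ, hψ, rfl⟩
        have hmem : peelLM r (v (Fin.last n)) (Fin.snoc (∑ i, lam i • v i) (lam (Fin.last n)))
            ∈ {x | ∃ lam' : Fin n → ℚ, (∀ i, 0 ≤ lam' i) ∧ x = ∑ i, lam' i • v (Fin.castSucc i)} := by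
          refine ⟨fun i => lam (Fin.castSucc i), fun i => hlam _, ?_⟩
          simp only [peelLM, LinearMap.coe_mk, AddHom.coe_mk]
          rw [Fin.snoc_last]
          funext j
          simp only [Pi.sub_apply, Fin.snoc_castSucc]
          rw [Fin.sum_univ_castSucc (f := fun i => lam i • v i)]
          simp [Pi.smul_apply]
        rw [hT] at hmem
        exact hmem ψ hψ
    · rintro ⟨c, hc⟩
      have hlast := hc (lastLM r) (Finset.mem_insert_self _ _)
      have hc0 : 0 ≤ c := by simpa [lastLM] using hlast
      have hpeel : peelLM r (v (Fin.last n)) (Fin.snoc x c) ∈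
          {x | ∃ lam' : Fin n → ℚ, (∀ i, 0 ≤ lam' i) ∧ x = ∑ i, lam' i • v (Fin.castSucc i)} := by
        rw [hT]
        intro ψ hψ
        exact hc _ (Finset.mem_insert_of_mem (Finset.mem_image_of_mem _ hψ))
      obtain ⟨mu, hmu, hmueq⟩ := hpeel
      refine ⟨Fin.snoc mu c, ?_, ?_⟩
      · intro i
        refine Fin.lastCases ?_ ?_ i
        · simpa using hc0
        · intro j; simpa using hmu j
      · have : (fun i => (Fin.snoc x c : Fin (r+1) → ℚ) (Fin.castSucc i)) - c • v (Fin.last n)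
            = ∑ i, mu i • v (Fin.castSucc i) := by
          have := hmueq
          simp only [peelLM, LinearMap.coe_mk, AddHom.coe_mk, Fin.snoc_last] at this
          exact this
        rw [Fin.sum_univ_castSucc (f := fun i => (Fin.snoc mu c : Fin (n+1) → ℚ) i • v i)]
        simp only [Fin.snoc_castSucc, Fin.snoc_last]
        funext j
        have hj := congrFun this j
        simp only [Pi.sub_apply, Fin.snoc_castSucc, Pi.smul_apply, Pi.add_apply,
          Finset.sum_apply, smul_eq_mul] at hj ⊢
        linarith


/-- cast of a natural vector to a rational vector -/
def cstv {n : ℕ} (a : Fin n → ℕ) : Fin n → ℚ := fun i => (a i : ℚ)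

lemma cstv_add {n : ℕ} (a b : Fin n → ℕ) : cstv (a + b) = cstv a + cstv b := by
  funext i; simp [cstv]

lemma sum_single_eq {n : ℕ} (y : Fin n → ℚ) :
    ∑ i, y i • (Pi.single i (1 : ℚ) : Fin n → ℚ) = y := by
  classical
  funext j
  simp only [Finset.sum_apply, Pi.smul_apply, Pi.single_apply, smul_eq_mul, mul_ite,
    mul_one, mul_zero]
  rw [Finset.sum_ite_eq Finset.univ j y]
  simp

lemma cstv_eq_sum {n : ℕ} (a : Fin n → ℕ) :
    cstv a = ∑ i, (a i : ℚ) • (Pi.single i (1 : ℚ) : Fin n → ℚ) := by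
  classical
  funext j
  simp only [Finset.sum_apply, Pi.smul_apply, Pi.single_apply, smul_eq_mul, mul_ite,
    mul_one, mul_zero]
  rw [Finset.sum_ite_eq Finset.univ j (fun i => (a i : ℚ))]
  simp [cstv]

/-- sum against an indicator coefficient vector -/
lemma indic_sum {N : ℕ} {α : Type*} [AddCommMonoid α] [Module ℚ α]
    (w : Fin N → α) (i0 : Fin N) :
    ∑ j, (Pi.single i0 (1 : ℚ) : Fin N → ℚ) j • w j = w i0 := by
  classical
  simp only [Pi.single_apply, ite_smul, one_smul, zero_smul]
  rw [Finset.sum_ite_eq' Finset.univ i0 w]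
  simp

/-- denominator clearing, integer version -/
lemma clearZ (M : ℕ) (x : ℚ) (hd : (x.den : ℕ) ∣ M) : ∃ z : ℤ, (z : ℚ) = M * x := by
  obtain ⟨t, ht⟩ := hd
  have h1 : (x.den : ℚ) * x = x.num := by
    rw [mul_comm]; exact_mod_cast Rat.mul_den_eq_num x
  have hM' : (M : ℚ) = (x.den : ℚ) * t := by exact_mod_cast congrArg (Nat.cast : ℕ → ℚ) ht
  refine ⟨t * x.num, ?_⟩
  push_cast
  rw [hM', mul_comm ((x.den : ℚ)) (t : ℚ), mul_assoc, h1]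

/-- denominator clearing, natural version -/
lemma clearN (M : ℕ) (x : ℚ) (hd : (x.den : ℕ) ∣ M) (hx : 0 ≤ x) :
    ∃ nn : ℕ, (nn : ℚ) = M * x := by
  obtain ⟨z, hz⟩ := clearZ M x hd
  have hz0 : 0 ≤ z := by
    have : (0 : ℚ) ≤ (z : ℚ) := by rw [hz]; positivity
    exact_mod_cast this
  refine ⟨z.toNat, ?_⟩
  have h2 : ((z.toNat : ℤ) : ℚ) = M * x := by rw [Int.toNat_of_nonneg hz0]; exact hz
  exact_mod_cast h2

theorem exists_exact_embedding (Q : Type u) [AddCommMonoid Q] [IsCancelAdd Q]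
    [AddMonoid.FG Q]
    (hsharp : ∀ x y : Q, x + y = 0 → x = 0)
    (hsat : ∀ a b : Q, ∀ n : ℕ, 1 ≤ n → (∃ c : Q, n • a = n • b + c) → ∃ d : Q, a = b + d) :
    ∃ (d : ℕ) (ι : Q →+ (Fin d → ℕ)), Function.Injective ι ∧
      (∀ x y : Q, ∀ mm : Fin d → ℕ, ι x + mm = ι y → ∃ e : Q, ι e = mm ∧ y = x + e) := by
  classical
  -- generators
  obtain ⟨S, hScl, hSfin⟩ := AddMonoid.fg_iff.1 ‹AddMonoid.FG Q›
  lift S to Finset Q using hSfin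
  set n := S.card with hn
  set q : Fin n → Q := fun i => (S.equivFin.symm i : Q) with hq
  -- the surjection from ℕ^n
  set p : (Fin n → ℕ) →+ Q :=
    { toFun := fun a => ∑ i, a i • q i
      map_zero' := by simp
      map_add' := fun a b => by
        simp only [Pi.add_apply, add_nsmul, Finset.sum_add_distrib] } with hp
  have hpsingle : ∀ i : Fin n, p (Pi.single i 1) = q i := by
    intro i
    show (∑ j, (Pi.single i 1 : Fin n → ℕ) j • q j) = q i
    simp only [Pi.single_apply, ite_smul, one_smul, zero_smul]
    rw [Finset.sum_ite_eq' Finset.univ i q]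
    simp
  have hpsurj : Function.Surjective p := by
    intro x
    have hx : x ∈ AddSubmonoid.closure (S : Set Q) := hScl ▸ AddSubmonoid.mem_top x
    have hle : AddSubmonoid.closure (S : Set Q) ≤ AddMonoidHom.mrange p := by
      rw [AddSubmonoid.closure_le]
      intro s hs
      refine ⟨Pi.single (S.equivFin ⟨s, hs⟩) 1, ?_⟩
      rw [hpsingle, hq]
      exact congrArg Subtype.val (S.equivFin.symm_apply_apply ⟨s, hs⟩)
    obtain ⟨a, ha⟩ := hle hx
    exact ⟨a, ha⟩
  -- the relation space
  set Wset : Set (Fin n → ℚ) := {x | ∃ u v : Fin n → ℕ, p u = p v ∧ x = cstv u - cstv v}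
    with hWset
  set W : Submodule ℚ (Fin n → ℚ) := Submodule.span ℚ Wset with hW
  obtain ⟨m, wf, hwf⟩ := Submodule.fg_iff_exists_fin_generating_family.1
    (IsNoetherian.noetherian W)
  have hwfW : ∀ j, wf j ∈ W := fun j => hwf ▸ Submodule.subset_span ⟨j, rfl⟩
  -- the cone generators
  set v : Fin (n + (m + m)) → (Fin n → ℚ) :=
    Fin.addCases (fun i => Pi.single i 1) (Fin.addCases wf (fun j => -wf j)) with hv
  obtain ⟨T, hTeq⟩ := cone_isPolyhedral v
  set d := T.card with hd
  set Φ : Fin d → ((Fin n → ℚ) →ₗ[ℚ] ℚ) := fun t => ((T.equivFin.symm t : T) : _) with hΦ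
  have hΦmem : ∀ t, Φ t ∈ T := fun t => (T.equivFin.symm t).2
  have hTofΦ : ∀ x : Fin n → ℚ, (∀ t, 0 ≤ Φ t x) → ∀ φ ∈ T, 0 ≤ φ x := by
    intro x h φ hφ
    have := h (T.equivFin ⟨φ, hφ⟩)
    simpa [hΦ] using this
  -- membership facts
  have hmem_cone : ∀ x : Fin n → ℚ,
      (∃ lam : Fin (n + (m + m)) → ℚ, (∀ i, 0 ≤ lam i) ∧ x = ∑ i, lam i • v i) ↔
      ∀ φ ∈ T, 0 ≤ φ x := by
    intro x
    constructor
    · intro hx φ hφ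
      have : x ∈ {x | ∀ φ ∈ T, 0 ≤ φ x} := hTeq ▸ hx
      exact this φ hφ
    · intro hx
      have : x ∈ {x | ∃ lam : Fin (n + (m + m)) → ℚ, (∀ i, 0 ≤ lam i) ∧ x = ∑ i, lam i • v i} := by
        rw [hTeq]; exact hx
      exact this
  have hφe : ∀ φ ∈ T, ∀ i : Fin n, 0 ≤ φ (Pi.single i (1:ℚ)) := by
    intro φ hφ i
    refine (hmem_cone _).1 ⟨Pi.single (Fin.castAdd (m + m) i) 1, ?_, ?_⟩ φ hφ
    · intro j; by_cases h : j = Fin.castAdd (m + m) i <;> simp [Pi.single_apply, h]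
    · rw [indic_sum v (Fin.castAdd (m + m) i)]
      simp [hv]
  -- elements of W are in the cone
  have hWcone : ∀ x ∈ W, ∀ φ ∈ T, 0 ≤ φ x := by
    intro x hx
    rw [← hwf, Submodule.mem_span_range_iff_exists_fun] at hx
    obtain ⟨c, hc⟩ := hx
    refine (hmem_cone x).1 ⟨Fin.addCases 0 (Fin.addCases (fun j => max (c j) 0)
      (fun j => max (-(c j)) 0)), ?_, ?_⟩
    · intro i
      refine Fin.addCases (motive := fun i => 0 ≤ Fin.addCases (motive := fun _ => ℚ) 0
        (Fin.addCases (fun j => max (c j) 0) (fun j => max (-(c j)) 0)) i) ?_ ?_ i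
      · intro j; rw [Fin.addCases_left]; simp
      · intro j
        rw [Fin.addCases_right]
        refine Fin.addCases (motive := fun j => 0 ≤ Fin.addCases (motive := fun _ => ℚ)
          (fun j => max (c j) 0) (fun j => max (-(c j)) 0) j) ?_ ?_ j
        · intro jj; rw [Fin.addCases_left]; exact le_max_right _ _
        · intro jj; rw [Fin.addCases_right]; exact le_max_right _ _
    · rw [Fin.sum_univ_add]
      have h1 : ∀ i : Fin n, (Fin.addCases (motive := fun _ => ℚ) 0 (Fin.addCases (fun j => max (c j) 0)
          (fun j => max (-(c j)) 0)) (Fin.castAdd (m + m) i)) • v (Fin.castAdd (m + m) i) = 0 := by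
        intro i; rw [Fin.addCases_left]; simp
      rw [Finset.sum_congr rfl (fun i _ => h1 i), Finset.sum_const, smul_zero, zero_add]
      rw [Fin.sum_univ_add (f := fun j : Fin (m + m) =>
        (Fin.addCases (motive := fun _ => ℚ) 0 (Fin.addCases (fun j => max (c j) 0)
          (fun j => max (-(c j)) 0)) (Fin.natAdd n j)) • v (Fin.natAdd n j))]
      have h2 : ∀ j : Fin m,
          (Fin.addCases (motive := fun _ => ℚ) 0 (Fin.addCases (fun j => max (c j) 0)
            (fun j => max (-(c j)) 0)) (Fin.natAdd n (Fin.castAdd m j))) • v (Fin.natAdd n (Fin.castAdd m j))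
          = (max (c j) 0) • wf j := by
        intro j
        rw [hv]
        simp only [Fin.addCases_right, Fin.addCases_left]
      have h3 : ∀ j : Fin m,
          (Fin.addCases (motive := fun _ => ℚ) 0 (Fin.addCases (fun j => max (c j) 0)
            (fun j => max (-(c j)) 0)) (Fin.natAdd n (Fin.natAdd m j))) • v (Fin.natAdd n (Fin.natAdd m j))
          = (max (-(c j)) 0) • (-(wf j)) := by
        intro j
        rw [hv]
        simp only [Fin.addCases_right]
      rw [Finset.sum_congr rfl (fun j _ => h2 j), Finset.sum_congr rfl (fun j _ => h3 j)]
      rw [← hc, ← Finset.sum_add_distrib]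
      refine Finset.sum_congr rfl fun j _ => ?_
      rw [smul_neg, ← sub_eq_add_neg, ← sub_smul]
      congr 1
      exact (max_zero_sub_max_neg_zero_eq_self (c j)).symm ▸ rfl
  have hW0 : ∀ φ ∈ T, ∀ x ∈ W, φ x = 0 := by
    intro φ hφ x hx
    have h1 := hWcone x hx φ hφ
    have h2 := hWcone (-x) (neg_mem hx) φ hφ
    rw [map_neg] at h2
    linarith
  -- well-definedness of Φ on fibers of p
  have hwelldef : ∀ a b : Fin n → ℕ, p a = p b → ∀ t, Φ t (cstv a) = Φ t (cstv b) := by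
    intro a b hab t
    have hmem : cstv a - cstv b ∈ W := Submodule.subset_span ⟨a, b, hab, rfl⟩
    have := hW0 (Φ t) (hΦmem t) _ hmem
    rw [map_sub] at this
    linarith
  -- common denominator
  set M : ℕ := ∏ t : Fin d, ∏ i : Fin n, (Φ t (Pi.single i 1)).den with hM
  have hM1 : 0 < M := Finset.prod_pos fun t _ => Finset.prod_pos fun i _ => (Φ t _).pos
  have hden : ∀ t i, ((Φ t (Pi.single i 1)).den : ℕ) ∣ M := by
    intro t i
    rw [hM]
    exact dvd_trans
      (Finset.dvd_prod_of_mem (fun i => (Φ t (Pi.single i 1)).den) (Finset.mem_univ i))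
      (Finset.dvd_prod_of_mem (fun t => ∏ i, (Φ t (Pi.single i 1)).den) (Finset.mem_univ t))
  have hν : ∀ t i, ∃ nn : ℕ, (nn : ℚ) = M * Φ t (Pi.single i 1) := fun t i =>
    clearN M _ (hden t i) (hφe (Φ t) (hΦmem t) i)
  choose ν hνc using hν
  set pre : Q → (Fin n → ℕ) := Function.surjInv hpsurj with hpre
  have hppre : ∀ x, p (pre x) = x := fun x => Function.surjInv_eq hpsurj x
  have hval : ∀ (a : Fin n → ℕ) (t : Fin d),
      ((∑ i, a i * ν t i : ℕ) : ℚ) = M * Φ t (cstv a) := by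
    intro a t
    push_cast
    rw [cstv_eq_sum a, map_sum, Finset.mul_sum]
    refine Finset.sum_congr rfl fun i _ => ?_
    rw [map_smul, smul_eq_mul]
    have h := hνc t i
    linear_combination (a i : ℚ) * h
  set ιf : Q → (Fin d → ℕ) := fun x t => ∑ i, pre x i * ν t i with hιf
  have hιcast : ∀ (x : Q) (a : Fin n → ℕ), p a = x → ∀ t,
      ((ιf x t : ℕ) : ℚ) = M * Φ t (cstv a) := by
    intro x a ha t
    rw [hιf]
    simp only
    rw [hval (pre x) t, hwelldef (pre x) a (by rw [hppre, ha])]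
  set ι : Q →+ (Fin d → ℕ) :=
    { toFun := ιf
      map_zero' := by
        funext t
        have h0 : ((ιf 0 t : ℕ) : ℚ) = M * Φ t (cstv 0) := hιcast 0 0 (map_zero p) t
        have hc0 : cstv (0 : Fin n → ℕ) = 0 := by funext j; simp [cstv]
        rw [hc0, map_zero, mul_zero] at h0
        exact_mod_cast h0
      map_add' := by
        intro x y
        funext t
        have h1 : ((ιf (x + y) t : ℕ) : ℚ) = M * Φ t (cstv (pre x + pre y)) :=
          hιcast (x + y) (pre x + pre y) (by rw [map_add, hppre, hppre]) t
        rw [cstv_add, map_add, mul_add, ← hιcast x (pre x) (hppre x) t,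
          ← hιcast y (pre y) (hppre y) t] at h1
        exact_mod_cast h1 } with hι
  have hιc : ∀ (x : Q) (t : Fin d), ((ι x t : ℕ) : ℚ) = M * Φ t (cstv (pre x)) :=
    fun x t => hιcast x (pre x) (hppre x) t
  have hexact0 : ∀ x y : Q, ∀ mm : Fin d → ℕ, ι x + mm = ι y → ∃ e : Q, y = x + e := by
    intro x y mm hmm
    have hpos : ∀ t, 0 ≤ Φ t (cstv (pre y) - cstv (pre x)) := by
      intro t
      have h1 := hιc x t
      have h2 := hιc y t
      have h3 : ((ι x t : ℕ) : ℚ) + mm t = ((ι y t : ℕ) : ℚ) := by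
        exact_mod_cast congrFun hmm t
      rw [map_sub]
      have hM0 : (0:ℚ) < M := by exact_mod_cast hM1
      nlinarith [h1, h2, h3, hM0, (by positivity : (0:ℚ) ≤ ((mm t : ℕ) : ℚ))]
    obtain ⟨lam, hlam0, hlameq⟩ := (hmem_cone _).2 (hTofΦ _ hpos)
    set lamE : Fin n → ℚ := fun i => lam (Fin.castAdd (m + m) i) with hlamE
    set z : Fin n → ℚ := ∑ j : Fin (m + m), lam (Fin.natAdd n j) • v (Fin.natAdd n j) with hz
    have hzW : z ∈ W := by
      refine Submodule.sum_mem _ fun j _ => Submodule.smul_mem _ _ ?_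
      refine Fin.addCases (motive := fun j => v (Fin.natAdd n j) ∈ W) ?_ ?_ j
      · intro jj
        have hvv : v (Fin.natAdd n (Fin.castAdd m jj)) = wf jj := by
          rw [hv]; simp only [Fin.addCases_right, Fin.addCases_left]
        rw [hvv]; exact hwfW jj
      · intro jj
        have hvv : v (Fin.natAdd n (Fin.natAdd m jj)) = -wf jj := by
          rw [hv]; simp only [Fin.addCases_right]
        rw [hvv]; exact neg_mem (hwfW jj)
    have hdecomp : cstv (pre y) - cstv (pre x)
        = (∑ i, lamE i • (Pi.single i 1 : Fin n → ℚ)) + z := by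
      rw [hlameq, Fin.sum_univ_add]
      congr 1
      refine Finset.sum_congr rfl fun i _ => ?_
      rw [hlamE]
      congr 1
      rw [hv]; simp only [Fin.addCases_left]
    rw [hW, Submodule.mem_span_set'] at hzW
    obtain ⟨K, cc, gg, hggsum⟩ := hzW
    have hgg : ∀ k : Fin K, ∃ u v' : Fin n → ℕ, p u = p v' ∧
        (gg k : Fin n → ℚ) = cstv u - cstv v' := fun k => (gg k).2
    choose uu vv hpuv hguv using hgg
    set NN : ℕ := (∏ i, (lamE i).den) * ∏ k, (cc k).den with hNN
    have hNN1 : 0 < NN := Nat.mul_pos (Finset.prod_pos fun i _ => (lamE i).pos)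
      (Finset.prod_pos fun k _ => (cc k).pos)
    have haN : ∀ i, ∃ nn : ℕ, (nn : ℚ) = NN * lamE i := by
      intro i
      refine clearN NN _ ?_ (hlam0 _)
      exact Dvd.dvd.mul_right (Finset.dvd_prod_of_mem _ (Finset.mem_univ i)) _
    choose aN haNc using haN
    have hzN : ∀ k, ∃ zz : ℤ, (zz : ℚ) = NN * cc k := by
      intro k
      refine clearZ NN _ ?_
      exact Dvd.dvd.mul_left (Finset.dvd_prod_of_mem _ (Finset.mem_univ k)) _
    choose zN hzNc using hzN
    set t1 : Fin K → ℕ := fun k => (zN k).toNat with ht1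
    set t2 : Fin K → ℕ := fun k => (-(zN k)).toNat with ht2
    have ht12 : ∀ k, (t1 k : ℚ) - (t2 k : ℚ) = NN * cc k := by
      intro k
      have h := Int.toNat_sub_toNat_neg (zN k)
      have h' : ((zN k).toNat : ℚ) - (((-(zN k)).toNat : ℤ) : ℚ) = ((zN k : ℤ) : ℚ) := by
        exact_mod_cast congrArg (fun r : ℤ => (r : ℚ)) h
      rw [ht1, ht2]
      push_cast at h' ⊢
      rw [h', hzNc k]
    set Lv : Fin n → ℕ := NN • pre y + ∑ k, (t1 k • vv k + t2 k • uu k) with hLv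
    set Rv : Fin n → ℕ := NN • pre x + aN + ∑ k, (t1 k • uu k + t2 k • vv k) with hRv
    have hLR : Lv = Rv := by
      funext j
      have hzj : z j = ∑ k, cc k * ((uu k j : ℚ) - (vv k j : ℚ)) := by
        rw [← hggsum, Finset.sum_apply]
        refine Finset.sum_congr rfl fun k _ => ?_
        rw [Pi.smul_apply, smul_eq_mul, hguv k]
        simp [cstv]
      have hsingj : (∑ i, lamE i • (Pi.single i 1 : Fin n → ℚ)) j = lamE j := by
        rw [sum_single_eq]
      have hco := congrFun hdecomp j
      rw [Pi.add_apply, hsingj, hzj, Pi.sub_apply] at hco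
      have hS : ∑ k, ((t1 k : ℚ) * (uu k j : ℚ) + (t2 k : ℚ) * (vv k j : ℚ))
          - ∑ k, ((t1 k : ℚ) * (vv k j : ℚ) + (t2 k : ℚ) * (uu k j : ℚ))
          = ∑ k, ((NN : ℚ) * (cc k * (uu k j : ℚ)) - (NN : ℚ) * (cc k * (vv k j : ℚ))) := by
        rw [← Finset.sum_sub_distrib]
        refine Finset.sum_congr rfl fun k _ => ?_
        have h := ht12 k
        linear_combination ((uu k j : ℚ) - (vv k j : ℚ)) * h
      have hmul := congrArg (fun r : ℚ => (NN : ℚ) * r) hco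
      simp only [mul_sub, mul_add, Finset.mul_sum] at hmul
      have hq2 : (Lv j : ℚ) = (Rv j : ℚ) := by
        rw [hLv, hRv]
        simp only [Pi.add_apply, Finset.sum_apply, Pi.smul_apply, smul_eq_mul]
        push_cast
        have haNj := haNc j
        simp only [cstv] at hmul
        linarith [hS, hmul, haNj]
      exact_mod_cast hq2
    have hpLR := congrArg p hLR
    rw [hLv, hRv] at hpLR
    simp only [map_add, map_nsmul, map_sum] at hpLR
    rw [hppre x, hppre y] at hpLR
    have hsums : ∑ k, (t1 k • p (vv k) + t2 k • p (uu k))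
        = ∑ k, (t1 k • p (uu k) + t2 k • p (vv k)) :=
      Finset.sum_congr rfl fun k _ => by rw [hpuv k]
    rw [hsums] at hpLR
    have hcanc : NN • y = NN • x + p aN := add_right_cancel hpLR
    exact hsat y x NN hNN1 ⟨p aN, hcanc⟩
  have hexact : ∀ x y : Q, ∀ mm : Fin d → ℕ, ι x + mm = ι y → ∃ e, ι e = mm ∧ y = x + e := by
    intro x y mm hmm
    obtain ⟨e, he⟩ := hexact0 x y mm hmm
    refine ⟨e, ?_, he⟩
    have h1 : ι x + ι e = ι y := by rw [← map_add, ← he]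
    have h2 : ι x + mm = ι x + ι e := by rw [hmm, h1]
    exact (add_left_cancel h2).symm
  have hinj : Function.Injective ι := by
    intro x y hxy
    obtain ⟨e, -, he⟩ := hexact x y 0 (by rw [add_zero]; exact hxy)
    obtain ⟨e', -, he'⟩ := hexact y x 0 (by rw [add_zero]; exact hxy.symm)
    have h0 : e + e' = 0 := by
      have hx2 : x + (e + e') = x + 0 := by rw [add_zero, ← add_assoc, ← he, ← he']
      exact add_left_cancel hx2
    rw [he, hsharp e e' h0, add_zero]
  exact ⟨d, ι, hinj, hexact⟩

theorem splitting_of_exact {Q : Type u} [AddCommMonoid Q] {d : ℕ}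
    (A : Type v) [CommRing A]
    (ι : Q →+ (Fin d → ℕ)) (hinj : Function.Injective ι)
    (hex : ∀ x y : Q, ∀ mm : Fin d → ℕ, ι x + mm = ι y → ∃ e, ι e = mm ∧ y = x + e) :
    ∃ σ : AddMonoidAlgebra A (Fin d → ℕ) →+ AddMonoidAlgebra A Q,
      (∀ (x : AddMonoidAlgebra A Q) (y : AddMonoidAlgebra A (Fin d → ℕ)),
        σ (AddMonoidAlgebra.mapDomainRingHom A ι x * y) = x * σ y) ∧
      (∀ x : AddMonoidAlgebra A Q, σ (AddMonoidAlgebra.mapDomainRingHom A ι x) = x) := by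
  classical
  set σ : AddMonoidAlgebra A (Fin d → ℕ) →+ AddMonoidAlgebra A Q :=
    Finsupp.liftAddHom (fun mm => if h : ∃ t : Q, ι t = mm then
      (AddMonoidAlgebra.singleAddHom h.choose : A →+ AddMonoidAlgebra A Q) else 0)
      |>.comp AddMonoidAlgebra.coeffAddEquiv.toAddMonoidHom with hσ
  have hσsingle : ∀ (mm : Fin d → ℕ) (a : A),
      σ (AddMonoidAlgebra.single mm a)
        = if h : ∃ t : Q, ι t = mm then AddMonoidAlgebra.single h.choose a else 0 := by
    intro mm a
    rw [hσ]
    show (Finsupp.liftAddHom _) (Finsupp.single mm a) = _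
    rw [Finsupp.liftAddHom_apply_single]
    split_ifs with h <;> rfl
  have hσι : ∀ (t : Q) (a : A),
      σ (AddMonoidAlgebra.single (ι t) a) = AddMonoidAlgebra.single t a := by
    intro t a
    rw [hσsingle]
    have h : ∃ t' : Q, ι t' = ι t := ⟨t, rfl⟩
    rw [dif_pos h]
    congr 1
    exact hinj h.choose_spec
  have hmapsingle : ∀ (t : Q) (a : A),
      (AddMonoidAlgebra.mapDomainRingHom A ι) (AddMonoidAlgebra.single t a)
        = AddMonoidAlgebra.single (ι t) a := by
    intro t a
    rw [AddMonoidAlgebra.mapDomainRingHom_apply, AddMonoidAlgebra.mapDomain_single]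
  have hsplit : ∀ x : AddMonoidAlgebra A Q, σ (AddMonoidAlgebra.mapDomainRingHom A ι x) = x := by
    intro x
    induction x using AddMonoidAlgebra.induction_linear with
    | zero => simp
    | add f g hf hg => rw [map_add, map_add, hf, hg]
    | single t a =>
      rw [hmapsingle, hσι]
  have hmod : ∀ (t : Q) (a : A) (y : AddMonoidAlgebra A (Fin d → ℕ)),
      σ (AddMonoidAlgebra.single (ι t) a * y) = AddMonoidAlgebra.single t a * σ y := by
    intro t a y
    induction y using AddMonoidAlgebra.induction_linear with
    | zero => simp
    | add f g hf hg => rw [mul_add, map_add, hf, hg, map_add, mul_add]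
    | single mm b =>
      rw [AddMonoidAlgebra.single_mul_single, hσsingle, hσsingle]
      by_cases h : ∃ t' : Q, ι t' = ι t + mm
      · rw [dif_pos h]
        have hch : ι h.choose = ι t + mm := h.choose_spec
        obtain ⟨e, he1, he2⟩ := hex t h.choose mm hch.symm
        have h' : ∃ t' : Q, ι t' = mm := ⟨e, he1⟩
        rw [dif_pos h']
        have he' : h'.choose = e := hinj (he1 ▸ h'.choose_spec)
        rw [he', AddMonoidAlgebra.single_mul_single, ← he2]
      · rw [dif_neg h]
        have h' : ¬∃ t' : Q, ι t' = mm := by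
          rintro ⟨t', ht'⟩
          exact h ⟨t + t', by rw [map_add, ht']⟩
        rw [dif_neg h', mul_zero]
  refine ⟨σ, ?_, hsplit⟩
  intro x y
  induction x using AddMonoidAlgebra.induction_linear with
  | zero => simp
  | add f g hf hg => rw [map_add, add_mul, map_add, hf, hg, add_mul]
  | single t a =>
    rw [hmapsingle, hmod]

end FourierMotzkin

/-- A fine, sharp, saturated commutative monoid `Q` admits an injective
monoid homomorphism `ι : Q → ℕ^d` such that the induced `A`-algebra map
`A[Q] → A[ℕ^d]` admits an `A[Q]`-linear splitting, for any commutative ring `A`. -/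
theorem stmt1 (Q : Type u) [AddCommMonoid Q] [IsCancelAdd Q] [AddMonoid.FG Q]
    (hsharp : ∀ x y : Q, x + y = 0 → x = 0)
    (hsat : ∀ a b : Q, ∀ n : ℕ, 1 ≤ n → (∃ c : Q, n • a = n • b + c) → ∃ d : Q, a = b + d)
    (A : Type v) [CommRing A] :
    ∃ (d : ℕ) (ι : Q →+ (Fin d → ℕ)), Function.Injective ι ∧
      ∃ σ : AddMonoidAlgebra A (Fin d → ℕ) →+ AddMonoidAlgebra A Q,
        (∀ (x : AddMonoidAlgebra A Q) (y : AddMonoidAlgebra A (Fin d → ℕ)),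
          σ (AddMonoidAlgebra.mapDomainRingHom A ι x * y) = x * σ y) ∧
        (∀ x : AddMonoidAlgebra A Q, σ (AddMonoidAlgebra.mapDomainRingHom A ι x) = x) := by
  obtain ⟨d, ι, hinj, hex⟩ := exists_exact_embedding Q hsharp hsat
  obtain ⟨σ, h1, h2⟩ := splitting_of_exact A ι hinj hex
  exact ⟨d, ι, hinj, σ, h1, h2⟩
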